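/- Let G be a group, K a subgroup of G of finite index, α : G → ℂˣ a character of G, and (ρ, W) a representation of K on a finite-dimensional complex vector space W. Let V = { f : G → W | f(kg) = ρ(k)(f(g)) for all k ∈ K, g ∈ G } be the induced representation of ρ to G, on which G acts by (σ(g)f)(x) = f(xg). If B is a nondegenerate symmetric bilinear form on W satisfying B(ρ(k)w, ρ(k)w') = α(k)·B(w,w') for all k ∈ K and w, w' ∈ W, then there exists a nondegenerate symmetric bilinear form B̃ on V satisfying B̃(σ(g)f, σ(g)f') = α(g)·B̃(f,f') for all g ∈ G and f, f' ∈ V. (This is the α-orthogonal case of Lemma 'lemma ref' of the paper: induction from a finite-index subgroup preserves α-orthogonality.) -/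

import Mathlib

/-!
Sum the `α`-twisted pointwise pairings over right cosets:
`B̃(f, f') = ∑_{Kx ∈ K\G} α(x)⁻¹ B(f x, f' x)`. The equivariance of `B` makes each summand
independent of the coset representative, and right translation by `g` permutes the cosets,
which gives the `α`-equivariance of `B̃`. Pairing `f` against the induced function supported on
the single coset `Kx` with value `w` at `x` recovers `α(x)⁻¹ B(f x, w)`, so nondegeneracy of `B`
gives nondegeneracy of `B̃`.
-/

/-- The space of the representation of `G` induced from a representation `ρ` of a subgroup
`K ≤ G` on `W`: the submodule of functions `f : G → W` with `f (k * g) = ρ k (f g)` for all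
`k ∈ K`, `g ∈ G`. -/
def inducedSubmodule {G : Type*} [Group G] (K : Subgroup G) {W : Type*} [AddCommGroup W]
    [Module ℂ W] (ρ : K →* (W ≃ₗ[ℂ] W)) : Submodule ℂ (G → W) where
  carrier := {f | ∀ (k : K) (g : G), f ((k : G) * g) = ρ k (f g)}
  add_mem' {f f'} hf hf' := fun k g => by
    simp only [Pi.add_apply, hf k g, hf' k g, map_add]
  zero_mem' := fun k g => by simp
  smul_mem' c f hf := fun k g => by
    simp only [Pi.smul_apply, hf k g, map_smul]

/-- The action of `g : G` on the induced space: `(σ g f) x = f (x * g)`. -/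
def inducedAction {G : Type*} [Group G] (K : Subgroup G) {W : Type*} [AddCommGroup W]
    [Module ℂ W] (ρ : K →* (W ≃ₗ[ℂ] W)) (g : G) :
    inducedSubmodule K ρ →ₗ[ℂ] inducedSubmodule K ρ where
  toFun f := ⟨fun x => (f : G → W) (x * g), fun k x => by
    simpa [mul_assoc] using f.2 k (x * g)⟩
  map_add' f f' := by ext x; simp
  map_smul' c f := by ext x; simp

open QuotientGroup

namespace QuotientGroup

variable {G : Type*} [Group G] {K : Subgroup G}

theorem apply_out_mk_of_mul_left {β : Type*} {P : G → β}
    (hP : ∀ (k : K) (x : G), P (k * x) = P x) (x : G) :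
    P (Quotient.mk (rightRel K) x).out = P x := by
  set y := (Quotient.mk (rightRel K) x).out
  have hxy : x * y⁻¹ ∈ K := rightRel_apply.mp (Quotient.mk_out x)
  calc P y = P ((⟨x * y⁻¹, hxy⟩ : K) * y) := (hP _ y).symm
    _ = P x := by simp

theorem sum_out_mul_right [Fintype (Quotient (rightRel K))] {M : Type*} [AddCommMonoid M]
    {P : G → M} (hP : ∀ (k : K) (x : G), P (k * x) = P x) (g : G) :
    ∑ q : Quotient (rightRel K), P (q.out * g) = ∑ q : Quotient (rightRel K), P q.out := by
  let e : Quotient (rightRel K) ≃ Quotient (rightRel K) :=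
    Quotient.congr (Equiv.mulRight g) fun a b => by simp [rightRel_apply, mul_assoc]
  refine Fintype.sum_equiv e _ _ fun q => ?_
  have he : e q = Quotient.mk (rightRel K) (q.out * g) := by
    conv_lhs => rw [← Quotient.out_eq q]
    rfl
  rw [he, apply_out_mk_of_mul_left hP]

end QuotientGroup

section InducedForm

variable {G : Type*} [Group G] (K : Subgroup G) {W : Type*} [AddCommGroup W] [Module ℂ W]
  (ρ : K →* (W ≃ₗ[ℂ] W))

def inducedEval (x : G) : inducedSubmodule K ρ →ₗ[ℂ] W :=
  LinearMap.proj x ∘ₗ (inducedSubmodule K ρ).subtype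

open scoped Classical in
noncomputable def inducedSingle (x : G) (w : W) : inducedSubmodule K ρ :=
  ⟨fun y => if h : y * x⁻¹ ∈ K then ρ ⟨y * x⁻¹, h⟩ w else 0, fun k y => by
    have hiff : (k : G) * y * x⁻¹ ∈ K ↔ y * x⁻¹ ∈ K := by
      rw [mul_assoc]; exact K.mul_mem_cancel_left k.2
    by_cases h : y * x⁻¹ ∈ K
    · have hk : (⟨k * y * x⁻¹, hiff.mpr h⟩ : K) = k * ⟨y * x⁻¹, h⟩ := by
        ext; simp [mul_assoc]
      simp only [dif_pos (hiff.mpr h), dif_pos h, hk, map_mul, LinearEquiv.mul_apply]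
    · simp only [dif_neg (mt hiff.mp h), dif_neg h, map_zero]⟩

variable {K ρ}

theorem inducedSingle_apply_self (x : G) (w : W) : (inducedSingle K ρ x w : G → W) x = w := by
  simp only [inducedSingle, mul_inv_cancel, K.one_mem, dif_pos]
  exact LinearEquiv.congr_fun (map_one ρ) w

theorem inducedSingle_apply_of_notMem {x y : G} (h : y * x⁻¹ ∉ K) (w : W) :
    (inducedSingle K ρ x w : G → W) y = 0 := by
  simp [inducedSingle, h]

variable (α : G →* ℂˣ) (B : W →ₗ[ℂ] W →ₗ[ℂ] ℂ)

noncomputable def twistedPairing (f f' : G → W) (x : G) : ℂ :=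
  (α x : ℂ)⁻¹ * B (f x) (f' x)

theorem twistedPairing_mul_left
    (hequiv : ∀ (k : K) (w w' : W), B (ρ k w) (ρ k w') = (α (k : G) : ℂ) * B w w')
    (f f' : inducedSubmodule K ρ) (k : K) (x : G) :
    twistedPairing α B f f' (k * x) = twistedPairing α B f f' x := by
  have hαk : (α k : ℂ) ≠ 0 := Units.ne_zero _
  simp only [twistedPairing, f.2 k x, f'.2 k x, hequiv, map_mul, Units.val_mul, mul_inv]
  field_simp

variable [Fintype (Quotient (rightRel K))]

noncomputable def inducedForm :
    inducedSubmodule K ρ →ₗ[ℂ] inducedSubmodule K ρ →ₗ[ℂ] ℂ :=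
  ∑ q : Quotient (rightRel K),
    (α q.out : ℂ)⁻¹ • B.compl₁₂ (inducedEval K ρ q.out) (inducedEval K ρ q.out)

theorem inducedForm_apply (f f' : inducedSubmodule K ρ) :
    inducedForm α B f f' = ∑ q : Quotient (rightRel K), twistedPairing α B f f' q.out := by
  simp [inducedForm, inducedEval, twistedPairing]

theorem inducedForm_comm (hsymm : ∀ w w' : W, B w w' = B w' w) (f f' : inducedSubmodule K ρ) :
    inducedForm α B f f' = inducedForm α B f' f := by
  simp only [inducedForm_apply, twistedPairing, hsymm]

theorem inducedForm_inducedAction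
    (hequiv : ∀ (k : K) (w w' : W), B (ρ k w) (ρ k w') = (α (k : G) : ℂ) * B w w')
    (g : G) (f f' : inducedSubmodule K ρ) :
    inducedForm α B (inducedAction K ρ g f) (inducedAction K ρ g f') =
      (α g : ℂ) * inducedForm α B f f' := by
  have hαg : (α g : ℂ) ≠ 0 := Units.ne_zero _
  have htwist (x : G) : twistedPairing α B (inducedAction K ρ g f) (inducedAction K ρ g f') x =
      (α g : ℂ) * twistedPairing α B f f' (x * g) := by
    simp only [twistedPairing, inducedAction, LinearMap.coe_mk, AddHom.coe_mk, map_mul,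
      Units.val_mul, mul_inv]
    field_simp
  simp only [inducedForm_apply, htwist, ← Finset.mul_sum]
  rw [sum_out_mul_right (twistedPairing_mul_left α B hequiv f f')]

theorem inducedForm_inducedSingle
    (hequiv : ∀ (k : K) (w w' : W), B (ρ k w) (ρ k w') = (α (k : G) : ℂ) * B w w')
    (f : inducedSubmodule K ρ) (x : G) (w : W) :
    inducedForm α B f (inducedSingle K ρ x w) = (α x : ℂ)⁻¹ * B ((f : G → W) x) w := by
  rw [inducedForm_apply, Finset.sum_eq_single (Quotient.mk (rightRel K) x)]
  · rw [apply_out_mk_of_mul_left (twistedPairing_mul_left α B hequiv _ _), twistedPairing,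
      inducedSingle_apply_self]
  · intro q _ hq
    have hout : q.out * x⁻¹ ∉ K := fun h =>
      hq <| (Quotient.out_eq q).symm.trans (Quotient.sound (rightRel_apply.mpr h)).symm
    rw [twistedPairing, inducedSingle_apply_of_notMem hout, map_zero, mul_zero]
  · exact fun h => (h (Finset.mem_univ _)).elim

theorem inducedForm_nondegenerate
    (hequiv : ∀ (k : K) (w w' : W), B (ρ k w) (ρ k w') = (α (k : G) : ℂ) * B w w')
    (hnondeg : ∀ w : W, (∀ w' : W, B w w' = 0) → w = 0)
    (f : inducedSubmodule K ρ) (hf : ∀ f' : inducedSubmodule K ρ, inducedForm α B f f' = 0) :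
    f = 0 := by
  ext x
  refine hnondeg _ fun w => ?_
  have h := hf (inducedSingle K ρ x w)
  rw [inducedForm_inducedSingle α B hequiv] at h
  exact (mul_eq_zero.mp h).resolve_left (inv_ne_zero (Units.ne_zero _))

end InducedForm

theorem induced_orthogonal_general
    {G : Type*} [Group G] (K : Subgroup G) (hK : K.FiniteIndex)
    {W : Type*} [AddCommGroup W] [Module ℂ W]
    (ρ : K →* (W ≃ₗ[ℂ] W)) (α : G →* ℂˣ)
    (B : W →ₗ[ℂ] W →ₗ[ℂ] ℂ)
    (hnondeg : ∀ w : W, (∀ w' : W, B w w' = 0) → w = 0)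
    (hsymm : ∀ w w' : W, B w w' = B w' w)
    (hequiv : ∀ (k : K) (w w' : W), B (ρ k w) (ρ k w') = (α (k : G) : ℂ) * B w w') :
    ∃ Bt : inducedSubmodule K ρ →ₗ[ℂ] inducedSubmodule K ρ →ₗ[ℂ] ℂ,
      (∀ f : inducedSubmodule K ρ, (∀ f' : inducedSubmodule K ρ, Bt f f' = 0) → f = 0) ∧
      (∀ f f' : inducedSubmodule K ρ, Bt f f' = Bt f' f) ∧
      (∀ (g : G) (f f' : inducedSubmodule K ρ),
        Bt (inducedAction K ρ g f) (inducedAction K ρ g f') = (α g : ℂ) * Bt f f') := by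
  have := hK
  have := Fintype.ofFinite (G ⧸ K)
  exact ⟨inducedForm α B, inducedForm_nondegenerate α B hequiv hnondeg,
    inducedForm_comm α B hsymm, inducedForm_inducedAction α B hequiv⟩

/-- **Lemma (induction preserves `α`-orthogonality).** Let `K` be a finite-index subgroup of a
group `G`, `α : G → ℂˣ` a character, and `(ρ, W)` a finite-dimensional complex representation
of `K` carrying a nondegenerate symmetric `α|_K`-equivariant bilinear form `B`. Then the
induced representation of `G` carries a nondegenerate symmetric `α`-equivariant bilinear
form. -/
theorem induced_orthogonal
    {G : Type*} [Group G] (K : Subgroup G) (hK : K.FiniteIndex)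
    {W : Type*} [AddCommGroup W] [Module ℂ W] [FiniteDimensional ℂ W]
    (ρ : K →* (W ≃ₗ[ℂ] W)) (α : G →* ℂˣ)
    (B : W →ₗ[ℂ] W →ₗ[ℂ] ℂ)
    (hnondeg : ∀ w : W, (∀ w' : W, B w w' = 0) → w = 0)
    (hsymm : ∀ w w' : W, B w w' = B w' w)
    (hequiv : ∀ (k : K) (w w' : W), B (ρ k w) (ρ k w') = (α (k : G) : ℂ) * B w w') :
    ∃ Bt : inducedSubmodule K ρ →ₗ[ℂ] inducedSubmodule K ρ →ₗ[ℂ] ℂ,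
      (∀ f : inducedSubmodule K ρ, (∀ f' : inducedSubmodule K ρ, Bt f f' = 0) → f = 0) ∧
      (∀ f f' : inducedSubmodule K ρ, Bt f f' = Bt f' f) ∧
      (∀ (g : G) (f f' : inducedSubmodule K ρ),
        Bt (inducedAction K ρ g f) (inducedAction K ρ g f') = (α g : ℂ) * Bt f f') :=
  induced_orthogonal_general K hK ρ α B hnondeg hsymm hequiv
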